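/- Let k ∈ ℕ, let D be an open subset of ℂ, let F : D → ℂ be holomorphic on D, and let s ∈ D with F(s) ≠ 0. Define M := max_{1 ≤ j ≤ k} ( |F^{(j)}(s)/F(s)| / j! )^{1/j} and N := max_{1 ≤ j ≤ k} ( |(F'/F)^{(j−1)}(s)| / j! )^{1/j}, where F^{(j)} denotes the j-th derivative and (F'/F)^{(j−1)} denotes the (j−1)-st derivative of the logarithmic derivative F'/F (which is holomorphic in a neighbourhood of s since F(s) ≠ 0). Then M/2 ≤ N ≤ 2M. -/

import Mathlib

/-!
Let `c j = F⁽ʲ⁾(s) / (j! F(s))` and `d m = (F'/F)⁽ᵐ⁾(s) / m!` be the Taylor coefficients of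
`F / F(s)` and of `F'/F` at `s`. Leibniz' rule applied to `F' = (F'/F) F` gives `c 0 = 1` and
`(n + 1) c (n + 1) = ∑_{m ≤ n} d m c (n - m)`. Both bounds are inductions along this
recurrence: `|c j| ≤ (2N)^j` because `m + 1 ≤ 2^(m+1)`, and `|d n| ≤ (2^(n+1) - 1) M^(n+1)`,
where `2^(n+1) - 1` solves the recurrence satisfied by the majorants.
-/

open Finset Nat

theorem le_pow_of_eq_sup'_rpow_inv {s : Finset ℕ} {hs : s.Nonempty} {a : ℕ → ℝ} {S : ℝ}
    (hS : S = s.sup' hs fun i => a i ^ (i : ℝ)⁻¹) {j : ℕ} (hj : j ∈ s) (hj0 : j ≠ 0)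
    (ha : 0 ≤ a j) : a j ≤ S ^ j :=
  calc a j = (a j ^ (j : ℝ)⁻¹) ^ j := (Real.rpow_inv_natCast_pow ha hj0).symm
    _ ≤ S ^ j :=
      hS ▸ pow_le_pow_left₀ (by positivity) (le_sup' (fun i => a i ^ (i : ℝ)⁻¹) hj) j

theorem sup'_rpow_inv_le {s : Finset ℕ} (hs : s.Nonempty) {a : ℕ → ℝ} {B : ℝ} (hB : 0 ≤ B)
    (hs0 : 0 ∉ s) (ha : ∀ j ∈ s, 0 ≤ a j) (h : ∀ j ∈ s, a j ≤ B ^ j) :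
    (s.sup' hs fun i => a i ^ (i : ℝ)⁻¹) ≤ B := by
  refine sup'_le hs _ fun j hj => ?_
  calc a j ^ (j : ℝ)⁻¹ ≤ (B ^ j) ^ (j : ℝ)⁻¹ :=
        Real.rpow_le_rpow (ha j hj) (h j hj) (by positivity)
    _ = B := Real.pow_rpow_inv_natCast hB (ne_of_mem_of_not_mem hj hs0)

variable {𝕜 : Type*} [RCLike 𝕜]

theorem RCLike.norm_natCast_add_one (n : ℕ) : ‖(n + 1 : 𝕜)‖ = n + 1 := by
  exact_mod_cast RCLike.norm_natCast (K := 𝕜) (n + 1)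

section Recurrence

variable {c d : ℕ → 𝕜} {k : ℕ}

theorem norm_coeff_le_of_norm_logCoeff_le (hc0 : c 0 = 1)
    (hrec : ∀ n : ℕ, ((n : 𝕜) + 1) * c (n + 1) = ∑ m ∈ range (n + 1), d m * c (n - m))
    {N : ℝ} (hd : ∀ m < k, ‖d m‖ ≤ (m + 1) * N ^ (m + 1)) :
    ∀ j ≤ k, ‖c j‖ ≤ (2 * N) ^ j := by
  intro j
  induction j using Nat.strong_induction_on with
  | _ j ih =>
  intro hjk
  rcases j with _ | n
  · simp [hc0]
  have hN : 0 ≤ N := (norm_nonneg _).trans (by simpa using hd 0 (by omega))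
  have key : ((n : ℝ) + 1) * ‖c (n + 1)‖ ≤ ((n : ℝ) + 1) * (2 * N) ^ (n + 1) :=
    calc ((n : ℝ) + 1) * ‖c (n + 1)‖ = ‖∑ m ∈ range (n + 1), d m * c (n - m)‖ := by
          rw [← hrec, norm_mul, RCLike.norm_natCast_add_one]
      _ ≤ ∑ m ∈ range (n + 1), ‖d m‖ * ‖c (n - m)‖ :=
          norm_sum_le_of_le _ fun m _ => norm_mul_le _ _
      _ ≤ ∑ m ∈ range (n + 1), (m + 1) * N ^ (m + 1) * (2 * N) ^ (n - m) := by
          gcongr with m hm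
          · exact hd m (by simp at hm; omega)
          · exact ih (n - m) (by omega) (by omega)
      _ ≤ ∑ m ∈ range (n + 1), (2 * N) ^ (n + 1) := by
          gcongr with m hm
          have hm : m ≤ n := by simpa [Nat.lt_succ_iff] using hm
          have h2 : (m + 1 : ℝ) ≤ 2 ^ (m + 1) := by exact_mod_cast Nat.lt_two_pow_self.le
          calc (m + 1) * N ^ (m + 1) * (2 * N) ^ (n - m)
              ≤ 2 ^ (m + 1) * N ^ (m + 1) * (2 * N) ^ (n - m) := by gcongr
            _ = (2 * N) ^ (n + 1) := by
                rw [← mul_pow, ← pow_add, show m + 1 + (n - m) = n + 1 by omega]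
      _ = ((n : ℝ) + 1) * (2 * N) ^ (n + 1) := by simp
  exact le_of_mul_le_mul_left key (by positivity)

theorem sum_range_two_pow_succ_sub_one (n : ℕ) :
    ∑ m ∈ range n, ((2 : ℝ) ^ (m + 1) - 1) = 2 ^ (n + 1) - 2 - n := by
  induction n with
  | zero => norm_num
  | succ n ih => rw [sum_range_succ, ih]; push_cast; ring

theorem norm_logCoeff_le_of_norm_coeff_le (hc0 : c 0 = 1)
    (hrec : ∀ n : ℕ, ((n : 𝕜) + 1) * c (n + 1) = ∑ m ∈ range (n + 1), d m * c (n - m))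
    {M : ℝ} (hc : ∀ j ≤ k, ‖c j‖ ≤ M ^ j) :
    ∀ n < k, ‖d n‖ ≤ (2 ^ (n + 1) - 1) * M ^ (n + 1) := by
  intro n
  induction n using Nat.strong_induction_on with
  | _ n ih =>
  intro hnk
  have hM : 0 ≤ M := (norm_nonneg _).trans (by simpa using hc 1 (by omega))
  have hdn : d n = (n + 1) * c (n + 1) - ∑ m ∈ range n, d m * c (n - m) := by
    rw [hrec, sum_range_succ, Nat.sub_self, hc0, mul_one, add_sub_cancel_left]
  have hterm : ∀ m ∈ range n,
      ‖d m‖ * ‖c (n - m)‖ ≤ ((2 : ℝ) ^ (m + 1) - 1) * M ^ (n + 1) := by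
    intro m hm
    have hmn : m < n := mem_range.mp hm
    have h1 : (1 : ℝ) ≤ 2 ^ (m + 1) := one_le_pow₀ (by norm_num)
    calc ‖d m‖ * ‖c (n - m)‖ ≤ ((2 ^ (m + 1) - 1) * M ^ (m + 1)) * M ^ (n - m) :=
          mul_le_mul (ih m hmn (by omega)) (hc (n - m) (by omega)) (norm_nonneg _)
            (mul_nonneg (by linarith) (by positivity))
      _ = (2 ^ (m + 1) - 1) * M ^ (n + 1) := by
          rw [mul_assoc, ← pow_add, show m + 1 + (n - m) = n + 1 by omega]
  calc ‖d n‖ ≤ (n + 1) * ‖c (n + 1)‖ + ∑ m ∈ range n, ‖d m‖ * ‖c (n - m)‖ := by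
        rw [hdn, ← RCLike.norm_natCast_add_one (𝕜 := 𝕜), ← norm_mul]
        exact (norm_sub_le _ _).trans
          (add_le_add le_rfl (norm_sum_le_of_le _ fun m _ => norm_mul_le _ _))
    _ ≤ (n + 1) * M ^ (n + 1) + ∑ m ∈ range n, ((2 : ℝ) ^ (m + 1) - 1) * M ^ (n + 1) :=
        add_le_add (mul_le_mul_of_nonneg_left (hc (n + 1) hnk) (by positivity))
          (sum_le_sum hterm)
    _ = (2 ^ (n + 1) - 1) * M ^ (n + 1) := by
        rw [← sum_mul, sum_range_two_pow_succ_sub_one]; ring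

end Recurrence

section TaylorCoeff

variable {F : 𝕜 → 𝕜} {s : 𝕜}

noncomputable def normalizedTaylorCoeff (F : 𝕜 → 𝕜) (s : 𝕜) (j : ℕ) : 𝕜 :=
  iteratedDeriv j F s / (j ! * F s)

noncomputable def logDerivTaylorCoeff (F : 𝕜 → 𝕜) (s : 𝕜) (m : ℕ) : 𝕜 :=
  iteratedDeriv m (logDeriv F) s / m !

theorem normalizedTaylorCoeff_zero (hFs : F s ≠ 0) : normalizedTaylorCoeff F s 0 = 1 := by
  simp [normalizedTaylorCoeff, hFs]

theorem norm_normalizedTaylorCoeff (j : ℕ) :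
    ‖normalizedTaylorCoeff F s j‖ = ‖iteratedDeriv j F s / F s‖ / j ! := by
  simp only [normalizedTaylorCoeff, norm_div, norm_mul, RCLike.norm_natCast]
  ring

theorem norm_logDerivTaylorCoeff_div (m : ℕ) :
    ‖logDerivTaylorCoeff F s m‖ / (m + 1) = ‖iteratedDeriv m (logDeriv F) s‖ / (m + 1)! := by
  simp only [logDerivTaylorCoeff, norm_div, RCLike.norm_natCast, Nat.factorial_succ,
    Nat.cast_mul, div_div]
  push_cast
  ring

theorem iteratedDeriv_succ_eq_sum_logDeriv (hF : AnalyticAt 𝕜 F s) (hFs : F s ≠ 0) (n : ℕ) :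
    iteratedDeriv (n + 1) F s = ∑ i ∈ range (n + 1),
      n.choose i * iteratedDeriv i (logDeriv F) s * iteratedDeriv (n - i) F s := by
  have hL : AnalyticAt 𝕜 (logDeriv F) s := hF.deriv.div hF hFs
  have hderiv : deriv F =ᶠ[nhds s] logDeriv F * F := by
    filter_upwards [hF.continuousAt.eventually_ne hFs] with z hz
    simp [logDeriv_apply, div_mul_cancel₀ _ hz]
  rw [iteratedDeriv_succ', hderiv.iteratedDeriv_eq,
    iteratedDeriv_mul hL.contDiffAt hF.contDiffAt]

theorem normalizedTaylorCoeff_recurrence (hF : AnalyticAt 𝕜 F s) (hFs : F s ≠ 0) (n : ℕ) :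
    ((n : 𝕜) + 1) * normalizedTaylorCoeff F s (n + 1) = ∑ m ∈ range (n + 1),
      logDerivTaylorCoeff F s m * normalizedTaylorCoeff F s (n - m) := by
  simp only [normalizedTaylorCoeff, logDerivTaylorCoeff]
  rw [iteratedDeriv_succ_eq_sum_logDeriv hF hFs, sum_div, mul_sum]
  refine sum_congr rfl fun m hm => ?_
  rw [Nat.cast_choose 𝕜 (Nat.lt_succ_iff.mp (mem_range.mp hm)), Nat.factorial_succ]
  push_cast
  field_simp
  rw [mul_assoc, mul_assoc (n ! : 𝕜),
    mul_div_mul_left _ _ (Nat.cast_ne_zero.mpr n.factorial_ne_zero)]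

end TaylorCoeff

theorem statement17 (k : ℕ) (hk : 1 ≤ k) (D : Set ℂ) (hD : IsOpen D)
    (F : ℂ → ℂ) (hF : DifferentiableOn ℂ F D) (s : ℂ) (hs : s ∈ D) (hFs : F s ≠ 0)
    (M N : ℝ)
    (hM : M = (Finset.Icc 1 k).sup' (Finset.nonempty_Icc.mpr hk)
      (fun j => (‖iteratedDeriv j F s / F s‖ / (j.factorial : ℝ)) ^ ((j : ℝ))⁻¹))
    (hN : N = (Finset.Icc 1 k).sup' (Finset.nonempty_Icc.mpr hk)
      (fun j => (‖iteratedDeriv (j - 1) (fun z => deriv F z / F z) s‖ /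
        (j.factorial : ℝ)) ^ ((j : ℝ))⁻¹)) :
    M / 2 ≤ N ∧ N ≤ 2 * M := by
  rw [show (fun z => deriv F z / F z) = logDeriv F from rfl] at hN
  have hFa : AnalyticAt ℂ F s := hF.analyticAt (hD.mem_nhds hs)
  have hc0 := normalizedTaylorCoeff_zero hFs
  have hrec := normalizedTaylorCoeff_recurrence hFa hFs
  have hc : ∀ j ≤ k, ‖normalizedTaylorCoeff F s j‖ ≤ M ^ j := by
    rintro (_ | j) hj
    · simp [hc0]
    rw [norm_normalizedTaylorCoeff]
    exact le_pow_of_eq_sup'_rpow_inv hM (mem_Icc.mpr ⟨by omega, hj⟩) (by omega) (by positivity)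
  have hd : ∀ m < k, ‖logDerivTaylorCoeff F s m‖ ≤ (m + 1) * N ^ (m + 1) := by
    intro m hm
    rw [← div_le_iff₀' (by positivity), norm_logDerivTaylorCoeff_div]
    exact le_pow_of_eq_sup'_rpow_inv hN (j := m + 1) (mem_Icc.mpr ⟨by omega, hm⟩) (by omega)
      (by positivity)
  have hM0 : 0 ≤ M := (norm_nonneg _).trans (by simpa using hc 1 hk)
  have hN0 : 0 ≤ N := (norm_nonneg _).trans (by simpa using hd 0 hk)
  constructor
  · rw [div_le_iff₀ two_pos, hM]
    refine sup'_rpow_inv_le _ (by positivity) (by simp) (fun _ _ => by positivity) fun j hj => ?_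
    rw [← norm_normalizedTaylorCoeff, mul_comm]
    exact norm_coeff_le_of_norm_logCoeff_le hc0 hrec hd j (mem_Icc.mp hj).2
  · rw [hN]
    refine sup'_rpow_inv_le _ (by positivity) (by simp) (fun _ _ => by positivity) fun j hj => ?_
    obtain ⟨m, rfl⟩ : ∃ m, j = m + 1 := ⟨j - 1, by simp at hj; omega⟩
    have hmk : m < k := by simp at hj; omega
    rw [Nat.add_sub_cancel, ← norm_logDerivTaylorCoeff_div]
    calc ‖logDerivTaylorCoeff F s m‖ / (m + 1) ≤ ‖logDerivTaylorCoeff F s m‖ :=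
          div_le_self (norm_nonneg _) (by linarith)
      _ ≤ (2 ^ (m + 1) - 1) * M ^ (m + 1) :=
          norm_logCoeff_le_of_norm_coeff_le hc0 hrec hc m hmk
      _ ≤ (2 * M) ^ (m + 1) := by rw [mul_pow]; gcongr; linarith
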